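/- arXiv:1803.01571 — 7 statements merged into one kernel-verified Lean document; each statement's English description precedes it below -/
import Mathlib

section
/- Let T be a knowledge base, φ a sentence, and C_φ a cutting for T and φ; define the explanatory relation ▷ from C_φ. If φ ▷ ψ, then Mod(T ∪ {ψ}) \ Triv ≠ ∅ and Mod(T ∪ {ψ}) \ Triv ⊆ Min(Mod(T ∪ {φ}) \ Triv, ⪯_{C_φ}), i.e. every nontrivial model of T ∪ {ψ} is a ⪯_{C_φ}-minimal element of the nontrivial models of T ∪ {φ}. -/
/-!
A minimal element `A` of the cutting lies in some maximal chain (Hausdorff's maximality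
principle), and by minimality `A` is below every other member of that chain. Hence a model
`m ∈ A` belongs to every member of the chain, so `m ⪯ m'` for every model `m'`, and `m` is
`⪯`-minimal. An explanation `ψ` has `Mod(T ∪ {ψ}) ⊆ A`, and `Triv ⊆ Mod(T ∪ {ψ}) ≠ Triv`
gives a nontrivial model.
-/

variable {Sen M : Type*}

/-- The class of models of a set of sentences in a satisfaction system. -/
def ModS (sat : M → Sen → Prop) (T : Set Sen) : Set M := {m | ∀ φ ∈ T, sat m φ}

/-- The trivial models: those satisfying every sentence. -/
def TrivS (sat : M → Sen → Prop) : Set M := {m | ∀ φ : Sen, sat m φ}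

/-- A cutting for a knowledge base `T` and a sentence `φ`. -/
structure IsCutting (sat : M → Sen → Prop) (T : Set Sen) (φ : Sen) (C : Set (Set M)) : Prop where
  subset_mod : ∀ A ∈ C, A ⊆ ModS sat (T ∪ {φ})
  triv_lt : ∀ A ∈ C, TrivS sat ⊂ A
  union_closed : ∀ S ⊆ C, S.Nonempty → ⋃₀ S ∈ C
  top_mem : ModS sat (T ∪ {φ}) ∈ C
  wf : C.WellFoundedOn (fun A B => A ⊂ B)

/-- The set of ⊆-minimal elements of a family of sets. -/
def MinCut (C : Set (Set M)) : Set (Set M) := {A ∈ C | ∀ B ∈ C, ¬ B ⊂ A}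

/-- The explanatory relation based on a cutting `C` (for the observation whose cutting is `C`):
`ψ` is an explanation iff `Mod(T ∪ {ψ}) ≠ Triv` and `Mod(T ∪ {ψ})` is contained in some
minimal element of `C`. -/
def ExplRel (sat : M → Sen → Prop) (T : Set Sen) (C : Set (Set M)) (ψ : Sen) : Prop :=
  ModS sat (T ∪ {ψ}) ≠ TrivS sat ∧ ∃ A ∈ MinCut C, ModS sat (T ∪ {ψ}) ⊆ A

/-- `c` is a maximal chain (for ⊆) among the subsets of `Cφ`. -/
def IsMaxChainIn (Cφ c : Set (Set M)) : Prop :=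
  c ⊆ Cφ ∧ IsChain (· ⊆ ·) c ∧
    ∀ c' : Set (Set M), c' ⊆ Cφ → IsChain (· ⊆ ·) c' → c ⊆ c' → c' = c

/-- The relation `⪯_{Cφ}` on models derived from a cutting `Cφ`. -/
def CutPre (Cφ : Set (Set M)) (m m' : M) : Prop :=
  ∃ c : Set (Set M), IsMaxChainIn Cφ c ∧ ∀ A ∈ c, m' ∈ A → m ∈ A

/-- The ⪯-minimal elements of a set of models. -/
def MinModels (r : M → M → Prop) (X : Set M) : Set M :=
  {m ∈ X | ∀ m' ∈ X, ¬ (r m' m ∧ ¬ r m m')}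

lemma trivS_subset_modS (sat : M → Sen → Prop) (T : Set Sen) : TrivS sat ⊆ ModS sat T :=
  fun _ hm φ _ => hm φ

lemma IsMaxChain.isMaxChainIn_image_val {C : Set (Set M)} {t : Set C}
    (ht : IsMaxChain (fun x y : C => (x : Set M) ⊆ y) t) :
    IsMaxChainIn C (Subtype.val '' t) := by
  refine ⟨Set.image_subset_iff.mpr fun x _ => x.2,
    ht.1.image_of_map_rel _ _ Subtype.val fun _ _ h => h, fun c' hc'C hc' htc' => ?_⟩
  have ht_eq : t = {x : C | (x : Set M) ∈ c'} :=
    ht.2 (fun x hx y hy hxy => hc' hx hy fun e => hxy (Subtype.ext e))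
      fun x hx => htc' ⟨x, hx, rfl⟩
  refine htc'.antisymm' fun B hB => ⟨⟨B, hc'C hB⟩, ?_, rfl⟩
  rw [ht_eq]
  exact hB

lemma exists_isMaxChainIn_mem {C : Set (Set M)} {A : Set M} (hA : A ∈ C) :
    ∃ c, IsMaxChainIn C c ∧ A ∈ c := by
  obtain ⟨t, ht, hAt⟩ :=
    (IsChain.singleton (r := fun x y : C => (x : Set M) ⊆ y) (a := ⟨A, hA⟩)).exists_maxChain
  exact ⟨_, ht.isMaxChainIn_image_val, ⟨A, hA⟩, hAt rfl, rfl⟩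

lemma subset_of_mem_minCut_of_isChain {C c : Set (Set M)} {A B : Set M} (hA : A ∈ MinCut C)
    (hcC : c ⊆ C) (hc : IsChain (· ⊆ ·) c) (hAc : A ∈ c) (hBc : B ∈ c) : A ⊆ B := by
  rcases hc.total hAc hBc with hAB | hBA
  · exact hAB
  · by_contra hAB
    exact hA.2 B (hcC hBc) ⟨hBA, hAB⟩

lemma cutPre_of_mem_minCut {C : Set (Set M)} {A : Set M} (hA : A ∈ MinCut C) {m : M}
    (hm : m ∈ A) (m' : M) : CutPre C m m' := by
  obtain ⟨c, hc, hAc⟩ := exists_isMaxChainIn_mem hA.1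
  exact ⟨c, hc, fun B hBc _ => subset_of_mem_minCut_of_isChain hA hc.1 hc.2.1 hAc hBc hm⟩

lemma mem_minModels_of_forall {r : M → M → Prop} {X : Set M} {m : M} (hmX : m ∈ X)
    (hm : ∀ m', r m m') : m ∈ MinModels r X :=
  ⟨hmX, fun m' _ hlt => hlt.2 (hm m')⟩

theorem stmt_1_general (sat : M → Sen → Prop) (T : Set Sen) (φ ψ : Sen)
    (Cφ : Set (Set M)) (hC : IsCutting sat T φ Cφ)
    (h : ExplRel sat T Cφ ψ) :
    (ModS sat (T ∪ {ψ}) \ TrivS sat).Nonempty ∧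
      ModS sat (T ∪ {ψ}) \ TrivS sat ⊆
        MinModels (CutPre Cφ) (ModS sat (T ∪ {φ}) \ TrivS sat) := by
  obtain ⟨hnontriv, A, hA, hψA⟩ := h
  have hnonempty : (ModS sat (T ∪ {ψ}) \ TrivS sat).Nonempty :=
    Set.sdiff_nonempty.mpr fun hsub => hnontriv (hsub.antisymm (trivS_subset_modS sat _))
  refine ⟨hnonempty, fun m ⟨hmψ, hmtriv⟩ => ?_⟩
  have hmA : m ∈ A := hψA hmψ
  exact mem_minModels_of_forall ⟨hC.subset_mod A hA.1 hmA, hmtriv⟩ (cutPre_of_mem_minCut hA hmA)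

theorem stmt_1 (sat : M → Sen → Prop) (T : Set Sen) (hT : T.Finite) (φ ψ : Sen)
    (Cφ : Set (Set M)) (hC : IsCutting sat T φ Cφ)
    (h : ExplRel sat T Cφ ψ) :
    (ModS sat (T ∪ {ψ}) \ TrivS sat).Nonempty ∧
      ModS sat (T ∪ {ψ}) \ TrivS sat ⊆
        MinModels (CutPre Cφ) (ModS sat (T ∪ {φ}) \ TrivS sat) :=
  stmt_1_general sat T φ ψ Cφ hC h
end

section
/- Let T be a knowledge base, φ, φ', ψ, ψ' sentences, and C a cutting for T and φ. If Mod(T ∪ {φ}) = Mod(T ∪ {φ'}), then C is also a cutting for T and φ'; and if moreover Mod(T ∪ {ψ}) = Mod(T ∪ {ψ'}) and φ ▷ ψ with respect to C, then φ' ▷ ψ' with respect to C. (Left and right logical equivalence of the explanatory relation based on cuttings.) -/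
variable {Sen M : Type*}

theorem IsCutting.of_modS_eq {sat : M → Sen → Prop} {T : Set Sen} {φ φ' : Sen}
    {C : Set (Set M)} (hC : IsCutting sat T φ C)
    (hφ : ModS sat (T ∪ {φ}) = ModS sat (T ∪ {φ'})) : IsCutting sat T φ' C :=
  ⟨hφ ▸ hC.subset_mod, hC.triv_lt, hC.union_closed, hφ ▸ hC.top_mem, hC.wf⟩

theorem ExplRel.of_modS_eq {sat : M → Sen → Prop} {T : Set Sen} {C : Set (Set M)} {ψ ψ' : Sen}
    (h : ExplRel sat T C ψ) (hψ : ModS sat (T ∪ {ψ}) = ModS sat (T ∪ {ψ'})) :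
    ExplRel sat T C ψ' :=
  ⟨hψ ▸ h.1, hψ ▸ h.2⟩

theorem stmt_2_general (sat : M → Sen → Prop) (T : Set Sen)
    (φ φ' ψ ψ' : Sen) (C : Set (Set M)) (hC : IsCutting sat T φ C)
    (hφ : ModS sat (T ∪ {φ}) = ModS sat (T ∪ {φ'})) :
    IsCutting sat T φ' C ∧
      (ModS sat (T ∪ {ψ}) = ModS sat (T ∪ {ψ'}) →
        ExplRel sat T C ψ → ExplRel sat T C ψ') :=
  ⟨hC.of_modS_eq hφ, fun hψ h => h.of_modS_eq hψ⟩

theorem stmt_2 (sat : M → Sen → Prop) (T : Set Sen) (hT : T.Finite)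
    (φ φ' ψ ψ' : Sen) (C : Set (Set M)) (hC : IsCutting sat T φ C)
    (hφ : ModS sat (T ∪ {φ}) = ModS sat (T ∪ {φ'})) :
    IsCutting sat T φ' C ∧
      (ModS sat (T ∪ {ψ}) = ModS sat (T ∪ {ψ'}) →
        ExplRel sat T C ψ → ExplRel sat T C ψ') :=
  stmt_2_general sat T φ φ' ψ ψ' C hC hφ
end

section
/- Let T be a knowledge base, C_φ a cutting for T and φ, and ▷ the explanatory relation based on C_φ. If φ ▷ ψ, T ∪ {ψ'} ⊨ ψ (i.e. Mod(T ∪ {ψ'}) ⊆ Mod(ψ)) and Mod(T ∪ {ψ'}) ≠ Triv, then φ ▷ ψ'. (Right strengthening RS.) -/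
variable {Sen M : Type*}

theorem modS_union (sat : M → Sen → Prop) (A B : Set Sen) :
    ModS sat (A ∪ B) = ModS sat A ∩ ModS sat B := by
  ext m
  simp only [ModS, Set.mem_ofPred_eq, Set.mem_inter_iff, Set.mem_union, or_imp, forall_and]

theorem modS_antitone (sat : M → Sen → Prop) : Antitone (ModS sat : Set Sen → Set M) :=
  fun _ _ hAB _ hm φ hφ => hm φ (hAB hφ)

theorem modS_union_singleton_subset (sat : M → Sen → Prop) (T : Set Sen) {ψ ψ' : Sen}
    (h : ModS sat (T ∪ {ψ'}) ⊆ ModS sat {ψ}) :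
    ModS sat (T ∪ {ψ'}) ⊆ ModS sat (T ∪ {ψ}) := by
  rw [modS_union sat T {ψ}]
  exact Set.subset_inter (modS_antitone sat Set.subset_union_left) h

theorem ExplRel.of_modS_subset {sat : M → Sen → Prop} {T : Set Sen} {C : Set (Set M)}
    {ψ ψ' : Sen} (h : ExplRel sat T C ψ) (hsub : ModS sat (T ∪ {ψ'}) ⊆ ModS sat (T ∪ {ψ}))
    (hne : ModS sat (T ∪ {ψ'}) ≠ TrivS sat) : ExplRel sat T C ψ' :=
  let ⟨_, A, hA, hψA⟩ := h
  ⟨hne, A, hA, hsub.trans hψA⟩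

theorem stmt_3_general (sat : M → Sen → Prop) (T : Set Sen)
    (ψ ψ' : Sen) (Cφ : Set (Set M))
    (h1 : ExplRel sat T Cφ ψ)
    (h2 : ModS sat (T ∪ {ψ'}) ⊆ ModS sat {ψ})
    (h3 : ModS sat (T ∪ {ψ'}) ≠ TrivS sat) :
    ExplRel sat T Cφ ψ' :=
  h1.of_modS_subset (modS_union_singleton_subset sat T h2) h3

theorem stmt_3 (sat : M → Sen → Prop) (T : Set Sen) (hT : T.Finite)
    (φ ψ ψ' : Sen) (Cφ : Set (Set M)) (hC : IsCutting sat T φ Cφ)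
    (h1 : ExplRel sat T Cφ ψ)
    (h2 : ModS sat (T ∪ {ψ'}) ⊆ ModS sat {ψ})
    (h3 : ModS sat (T ∪ {ψ'}) ≠ TrivS sat) :
    ExplRel sat T Cφ ψ' :=
  stmt_3_general sat T ψ ψ' Cφ h1 h2 h3
end

section
/- Assume that for every class 𝕄 ⊆ Mod there exists a finite set T' ⊆ Sen with Mod(T') = 𝕄 (finite axiomatizability), that the satisfaction system has semantic conjunction, and that there is a sentence ⊤ with Mod(⊤) = Mod. Then for every knowledge base T, every sentence φ and every cutting C_φ for T and φ, there exists ψ ∈ Sen with φ ▷ ψ (with respect to C_φ); in particular Expla_T(φ) ≠ ∅. -/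
variable {Sen M : Type*}

/-- The set of explanations of `φ` over `T`. -/
def Expla (sat : M → Sen → Prop) (T : Set Sen) (φ : Sen) : Set Sen :=
  {ψ | ModS sat (T ∪ {ψ}) ≠ TrivS sat ∧ ∀ m ∈ ModS sat (T ∪ {ψ}), sat m φ}

/-! The minimal elements of a cutting exist by well-foundedness. Finite axiomatizability together
with conjunction and `⊤` lets a single sentence `ψ` axiomatize such a minimal element `A`; since
`A ⊆ Mod(T)`, adding `T` does not change this, so `Mod(T ∪ {ψ}) = A`, which is non-trivial and
contained in `Mod(φ)`. -/

section SatisfactionSystem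

variable (sat : M → Sen → Prop)

lemma ModS_union (T S : Set Sen) : ModS sat (T ∪ S) = ModS sat T ∩ ModS sat S := by
  ext m; simp [ModS, or_imp, forall_and]

lemma ModS_insert (a : Sen) (T : Set Sen) :
    ModS sat (insert a T) = ModS sat {a} ∩ ModS sat T := by
  rw [Set.insert_eq, ModS_union]

lemma ModS_empty : ModS sat (∅ : Set Sen) = Set.univ := by
  ext m; simp [ModS]

lemma exists_ModS_singleton_eq_of_finite
    (conj : ∀ φ₁ φ₂ : Sen, ∃ χ : Sen, ModS sat {χ} = ModS sat {φ₁} ∩ ModS sat {φ₂})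
    (top : ∃ τ : Sen, ModS sat {τ} = Set.univ)
    {T : Set Sen} (hT : T.Finite) : ∃ χ : Sen, ModS sat {χ} = ModS sat T := by
  induction T, hT using Set.Finite.induction_on with
  | empty => simpa only [ModS_empty] using top
  | @insert a s _ _ ih =>
    obtain ⟨χs, hχs⟩ := ih
    obtain ⟨χ, hχ⟩ := conj a χs
    exact ⟨χ, by rw [hχ, hχs, ModS_insert]⟩

lemma exists_ModS_singleton_eq
    (finax : ∀ X : Set M, ∃ T' : Set Sen, T'.Finite ∧ ModS sat T' = X)
    (conj : ∀ φ₁ φ₂ : Sen, ∃ χ : Sen, ModS sat {χ} = ModS sat {φ₁} ∩ ModS sat {φ₂})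
    (top : ∃ τ : Sen, ModS sat {τ} = Set.univ) (X : Set M) :
    ∃ ψ : Sen, ModS sat {ψ} = X := by
  obtain ⟨T', hT'fin, rfl⟩ := finax X
  exact exists_ModS_singleton_eq_of_finite sat conj top hT'fin

end SatisfactionSystem

namespace IsCutting

variable {sat : M → Sen → Prop} {T : Set Sen} {φ : Sen} {C : Set (Set M)}

lemma exists_mem_minCut (hC : IsCutting sat T φ C) : ∃ A, A ∈ MinCut C := by
  obtain ⟨A, hA⟩ := hC.wf.exists_minimal ⟨_, hC.top_mem⟩
  exact ⟨A, hA.prop, fun _ hB => hA.not_lt hB⟩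

lemma subset_ModS (hC : IsCutting sat T φ C) {A : Set M} (hA : A ∈ C) : A ⊆ ModS sat T :=
  (hC.subset_mod A hA).trans (by rw [ModS_union]; exact Set.inter_subset_left)

lemma ModS_union_singleton_eq (hC : IsCutting sat T φ C) {A : Set M} (hA : A ∈ C) {ψ : Sen}
    (hψ : ModS sat {ψ} = A) : ModS sat (T ∪ {ψ}) = A := by
  rw [ModS_union, hψ]
  exact Set.inter_eq_self_of_subset_right (hC.subset_ModS hA)

lemma explRel_of_ModS_singleton_eq (hC : IsCutting sat T φ C) {A : Set M} (hA : A ∈ MinCut C)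
    {ψ : Sen} (hψ : ModS sat {ψ} = A) : ExplRel sat T C ψ := by
  have hTψ := hC.ModS_union_singleton_eq hA.1 hψ
  refine ⟨?_, A, hA, hTψ.le⟩
  rw [hTψ]
  exact (hC.triv_lt A hA.1).ne'

lemma mem_Expla_of_explRel (hC : IsCutting sat T φ C) {ψ : Sen} (hψ : ExplRel sat T C ψ) :
    ψ ∈ Expla sat T φ := by
  obtain ⟨hne, A, hA, hsub⟩ := hψ
  exact ⟨hne, fun m hm => hC.subset_mod A hA.1 (hsub hm) φ (Or.inr rfl)⟩

end IsCutting

theorem stmt_5_general (sat : M → Sen → Prop)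
    (finax : ∀ X : Set M, ∃ T' : Set Sen, T'.Finite ∧ ModS sat T' = X)
    (conj : ∀ φ₁ φ₂ : Sen, ∃ χ : Sen, ModS sat {χ} = ModS sat {φ₁} ∩ ModS sat {φ₂})
    (top : ∃ τ : Sen, ModS sat {τ} = Set.univ)
    (T : Set Sen) (φ : Sen) (Cφ : Set (Set M))
    (hC : IsCutting sat T φ Cφ) :
    (∃ ψ : Sen, ExplRel sat T Cφ ψ) ∧ (Expla sat T φ).Nonempty := by
  obtain ⟨A, hA⟩ := hC.exists_mem_minCut
  obtain ⟨ψ, hψ⟩ := exists_ModS_singleton_eq sat finax conj top A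
  have hexpl := hC.explRel_of_ModS_singleton_eq hA hψ
  exact ⟨⟨ψ, hexpl⟩, ψ, hC.mem_Expla_of_explRel hexpl⟩

theorem stmt_5 (sat : M → Sen → Prop)
    (finax : ∀ X : Set M, ∃ T' : Set Sen, T'.Finite ∧ ModS sat T' = X)
    (conj : ∀ φ₁ φ₂ : Sen, ∃ χ : Sen, ModS sat {χ} = ModS sat {φ₁} ∩ ModS sat {φ₂})
    (top : ∃ τ : Sen, ModS sat {τ} = Set.univ)
    (T : Set Sen) (hT : T.Finite) (φ : Sen) (Cφ : Set (Set M))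
    (hC : IsCutting sat T φ Cφ) :
    (∃ ψ : Sen, ExplRel sat T Cφ ψ) ∧ (Expla sat T φ).Nonempty :=
  stmt_5_general sat finax conj top T φ Cφ hC
end

section
/- Let C_φ be a cutting for a knowledge base T and φ that is totally ordered by inclusion, let φ ∧ φ' be a semantic conjunction, and set C_{φ∧φ'} = {𝕄 ∩ Mod(φ') | 𝕄 ∈ C_φ}. If φ ▷ ψ (with respect to C_φ) and T ∪ {ψ} ⊨ φ', then C_{φ∧φ'} is a cutting for T and φ ∧ φ' and φ ∧ φ' ▷ ψ (with respect to C_{φ∧φ'}). (Cautious monotony E-CM for chain cuttings.) -/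
/-!
In a chain, a minimal element is the least element; so the minimal set `A₀` of `C_φ` that
contains `Mod(T ∪ {ψ})` lies below every member of `C_φ`. Since `T ∪ {ψ} ⊨ φ'`, a non-trivial model
of `T ∪ {ψ}` then lies in every `A ∩ Mod(φ')`, which keeps these sets strictly above `Triv`, and
`A₀ ∩ Mod(φ')` is the least element of the new family. Intersecting with `Mod(φ')` is monotone and
commutes with unions, and a monotone image of a well-founded chain is again well-founded.
-/

variable {Sen M : Type*}

lemma modS_union_singleton (sat : M → Sen → Prop) (T : Set Sen) (φ : Sen) :
    ModS sat (T ∪ {φ}) = ModS sat T ∩ ModS sat {φ} := by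
  ext m
  simp [ModS, or_imp, forall_and, and_comm]

lemma mem_minCut_of_forall_subset {C : Set (Set M)} {A : Set M} (hA : A ∈ C)
    (hleast : ∀ B ∈ C, A ⊆ B) : A ∈ MinCut C :=
  ⟨hA, fun B hB hBA => hBA.not_subset (hleast B hB)⟩

lemma IsChain.subset_of_mem_minCut {C : Set (Set M)} (hchain : IsChain (· ⊆ ·) C)
    {A B : Set M} (hA : A ∈ MinCut C) (hB : B ∈ C) : A ⊆ B := by
  rcases eq_or_ne B A with rfl | hne
  · rfl
  rcases hchain.total hA.1 hB with hAB | hBA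
  · exact hAB
  · exact absurd (hBA.ssubset_of_ne hne) (hA.2 B hB)

lemma sUnion_image_inter (S : Set (Set M)) (B : Set M) :
    ⋃₀ ((· ∩ B) '' S) = ⋃₀ S ∩ B := by
  rw [Set.sUnion_image, Set.sUnion_eq_biUnion, Set.iUnion₂_inter]

lemma Set.WellFoundedOn.image_of_isChain {α β : Type*} [Preorder α] [Preorder β] {C : Set α}
    (hwf : C.WellFoundedOn (· < ·)) (hchain : IsChain (· ≤ ·) C) {f : α → β} (hf : Monotone f) :
    (f '' C).WellFoundedOn (· < ·) := by
  rw [Set.wellFoundedOn_image]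
  refine hwf.mono' fun a ha b hb hfab => ?_
  rcases hchain.total ha hb with hab | hba
  · exact hab.lt_of_not_ge fun hba => hfab.not_ge (hf hba)
  · exact absurd (hf hba) hfab.not_ge

lemma IsCutting.image_inter {sat : M → Sen → Prop} {T : Set Sen} {φ χ : Sen}
    {C : Set (Set M)} {B : Set M} (hC : IsCutting sat T φ C) (hchain : IsChain (· ⊆ ·) C)
    (hχ : ModS sat (T ∪ {χ}) = ModS sat (T ∪ {φ}) ∩ B) (htriv : ∀ A ∈ C, TrivS sat ⊂ A ∩ B) :
    IsCutting sat T χ ((· ∩ B) '' C) where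
  subset_mod := by
    rintro _ ⟨A, hA, rfl⟩
    exact hχ ▸ Set.inter_subset_inter_left B (hC.subset_mod A hA)
  triv_lt := by
    rintro _ ⟨A, hA, rfl⟩
    exact htriv A hA
  union_closed S hS hSne := by
    obtain ⟨U, hUC, rfl⟩ := Set.subset_image_iff.mp hS
    exact ⟨⋃₀ U, hC.union_closed U hUC (Set.image_nonempty.mp hSne), (sUnion_image_inter U B).symm⟩
  top_mem := hχ ▸ ⟨_, hC.top_mem, rfl⟩
  wf := hC.wf.image_of_isChain hchain fun _ _ h => Set.inter_subset_inter_left B h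

theorem stmt_8_general (sat : M → Sen → Prop) (T : Set Sen)
    (φ φ' χ ψ : Sen) (Cφ : Set (Set M)) (hC : IsCutting sat T φ Cφ)
    (hchain : IsChain (· ⊆ ·) Cφ)
    (hconj : ModS sat {χ} = ModS sat {φ} ∩ ModS sat {φ'})
    (h1 : ExplRel sat T Cφ ψ)
    (h2 : ModS sat (T ∪ {ψ}) ⊆ ModS sat {φ'}) :
    IsCutting sat T χ ((fun A => A ∩ ModS sat {φ'}) '' Cφ) ∧
      ExplRel sat T ((fun A => A ∩ ModS sat {φ'}) '' Cφ) ψ := by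
  obtain ⟨hne, A₀, hA₀, hψA₀⟩ := h1
  have hleast : ∀ A ∈ Cφ, A₀ ⊆ A := fun A hA => hchain.subset_of_mem_minCut hA₀ hA
  have hψ : ∀ A ∈ Cφ, ModS sat (T ∪ {ψ}) ⊆ A ∩ ModS sat {φ'} := fun A hA =>
    Set.subset_inter (hψA₀.trans (hleast A hA)) h2
  have htriv : TrivS sat ⊂ ModS sat (T ∪ {ψ}) :=
    (trivS_subset_modS sat _).ssubset_of_ne (Ne.symm hne)
  have hχ : ModS sat (T ∪ {χ}) = ModS sat (T ∪ {φ}) ∩ ModS sat {φ'} := by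
    rw [modS_union_singleton, modS_union_singleton, hconj, Set.inter_assoc]
  refine ⟨hC.image_inter hchain hχ fun A hA => htriv.trans_subset (hψ A hA), hne, _,
    mem_minCut_of_forall_subset (Set.mem_image_of_mem _ hA₀.1) ?_, hψ A₀ hA₀.1⟩
  rintro _ ⟨A, hA, rfl⟩
  exact Set.inter_subset_inter_left _ (hleast A hA)

theorem stmt_8 (sat : M → Sen → Prop) (T : Set Sen) (hT : T.Finite)
    (φ φ' χ ψ : Sen) (Cφ : Set (Set M)) (hC : IsCutting sat T φ Cφ)
    (hchain : IsChain (· ⊆ ·) Cφ)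
    (hconj : ModS sat {χ} = ModS sat {φ} ∩ ModS sat {φ'})
    (h1 : ExplRel sat T Cφ ψ)
    (h2 : ModS sat (T ∪ {ψ}) ⊆ ModS sat {φ'}) :
    IsCutting sat T χ ((fun A => A ∩ ModS sat {φ'}) '' Cφ) ∧
      ExplRel sat T ((fun A => A ∩ ModS sat {φ'}) '' Cφ) ψ :=
  stmt_8_general sat T φ φ' χ ψ Cφ hC hchain hconj h1 h2
end

section
/- Let C_φ be a cutting for a knowledge base T and a sentence φ that is totally ordered by inclusion (as are the cuttings C_lcr and C_lnr derived from a retraction). Then the derived relation ⪯_{C_φ} on Mod is a total pre-order: it is reflexive, transitive, and any two models are comparable. -/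
variable {Sen M : Type*}

theorem IsChain.isMaxChainIn_self {Cφ : Set (Set M)} (h : IsChain (· ⊆ ·) Cφ) :
    IsMaxChainIn Cφ Cφ :=
  ⟨subset_rfl, h, fun _ hc' _ hcc' => subset_antisymm hc' hcc'⟩

theorem IsMaxChainIn.eq_of_isChain {Cφ c : Set (Set M)} (hc : IsMaxChainIn Cφ c)
    (h : IsChain (· ⊆ ·) Cφ) : c = Cφ :=
  (hc.2.2 Cφ subset_rfl h hc.1).symm

theorem cutPre_iff_of_isChain {Cφ : Set (Set M)} (h : IsChain (· ⊆ ·) Cφ) (m m' : M) :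
    CutPre Cφ m m' ↔ ∀ A ∈ Cφ, m' ∈ A → m ∈ A := by
  constructor
  · rintro ⟨c, hc, hmm'⟩
    rwa [hc.eq_of_isChain h] at hmm'
  · exact fun hmm' => ⟨Cφ, h.isMaxChainIn_self, hmm'⟩

theorem stmt_18_general (Cφ : Set (Set M)) (hchain : IsChain (· ⊆ ·) Cφ) :
    Reflexive (CutPre Cφ) ∧ Transitive (CutPre Cφ) ∧
      ∀ m m' : M, CutPre Cφ m m' ∨ CutPre Cφ m' m := by
  have hiff := cutPre_iff_of_isChain hchain
  refine ⟨fun m => (hiff m m).2 fun _ _ hm => hm, fun a b c hab hbc => ?_, fun m m' => ?_⟩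
  · rw [hiff] at hab hbc ⊢
    exact fun A hA hc => hab A hA (hbc A hA hc)
  · rw [hiff, hiff]
    by_contra! ⟨⟨A, hA, hm'A, hmA⟩, ⟨B, hB, hmB, hm'B⟩⟩
    rcases hchain.total hA hB with hAB | hBA
    · exact hm'B (hAB hm'A)
    · exact hmA (hBA hmB)

theorem stmt_18 (sat : M → Sen → Prop) (T : Set Sen) (hT : T.Finite)
    (φ : Sen) (Cφ : Set (Set M)) (hC : IsCutting sat T φ Cφ)
    (hchain : IsChain (· ⊆ ·) Cφ) :
    Reflexive (CutPre Cφ) ∧ Transitive (CutPre Cφ) ∧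
      ∀ m m' : M, CutPre Cφ m m' ∨ CutPre Cφ m' m :=
  stmt_18_general Cφ hchain
end

section
/- Let n be a natural number and let V = (Fin n → Bool) be the set of propositional valuations over n variables. For X ⊆ V define the morphological erosion by the Hamming ball of radius 1: ε(X) = {ν ∈ V | ∀ν' ∈ V, hammingDist(ν, ν') ≤ 1 → ν' ∈ X}. Then ε is a retraction: (i) ε(X) ⊆ X for every X ⊆ V (anti-extensivity), and (ii) for every X ≠ V there exists k ∈ ℕ such that the k-fold iterate ε^k(X) = ∅ (vacuum). -/
/-!
A valuation survives `k` erosions only if the whole Hamming ball of radius `k` around it lies in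
`X`: a point at distance `≤ k + 1` is reached by a path of length `≤ k` followed by a single flip.
The ball of radius `n` is the whole cube, so `ε^n(X)` is empty as soon as some valuation misses `X`.
-/

/-- Morphological erosion of a set of propositional valuations by the Hamming ball of radius 1. -/
def eros (n : ℕ) (X : Set (Fin n → Bool)) : Set (Fin n → Bool) :=
  {ν | ∀ ν' : Fin n → Bool, hammingDist ν ν' ≤ 1 → ν' ∈ X}

section Hamming

variable {ι : Type*} [Fintype ι] [DecidableEq ι] {β : ι → Type*} [∀ i, DecidableEq (β i)]

theorem hammingDist_update_self_le_one (x : ∀ i, β i) (i : ι) (a : β i) :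
    hammingDist (Function.update x i a) x ≤ 1 := by
  refine (Finset.card_le_card fun j hj => ?_).trans (Finset.card_singleton i).le
  by_contra hji
  simp_all [Function.update_of_ne (Finset.notMem_singleton.mp hji)]

theorem hammingDist_update_of_ne {x y : ∀ i, β i} {i : ι} (h : y i ≠ x i) :
    hammingDist y (Function.update x i (y i)) + 1 = hammingDist y x := by
  have hsupport : ({j | y j ≠ Function.update x i (y i) j} : Finset ι) =
      ({j | y j ≠ x j} : Finset ι).erase i := by
    ext j
    by_cases hji : j = i <;> simp [hji, Function.update_of_ne]
  rw [hammingDist, hammingDist, hsupport, Finset.card_erase_add_one (by simpa using h)]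

theorem exists_hammingDist_le_and_hammingDist_le_one {x y : ∀ i, β i} {k : ℕ}
    (h : hammingDist y x ≤ k + 1) : ∃ z, hammingDist y z ≤ k ∧ hammingDist z x ≤ 1 := by
  by_cases hxy : y = x
  · exact ⟨x, by simp [hxy], by simp⟩
  obtain ⟨i, hi⟩ := Function.ne_iff.mp hxy
  refine ⟨Function.update x i (y i), ?_, hammingDist_update_self_le_one x i (y i)⟩
  have := hammingDist_update_of_ne hi
  omega

end Hamming

theorem eros_subset (n : ℕ) (X : Set (Fin n → Bool)) : eros n X ⊆ X :=
  fun ν hν => hν ν (by simp)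

theorem mem_of_mem_iterate_eros {n k : ℕ} {X : Set (Fin n → Bool)} {μ ν : Fin n → Bool}
    (hμ : μ ∈ (eros n)^[k] X) (hμν : hammingDist μ ν ≤ k) : ν ∈ X := by
  induction k generalizing X ν with
  | zero => rwa [← hammingDist_lt_one.mp (by omega : hammingDist μ ν < 1)]
  | succ k ih =>
    obtain ⟨ν', hμν', hν'ν⟩ := exists_hammingDist_le_and_hammingDist_le_one hμν
    -- `(eros n)^[k + 1] X` unfolds to `(eros n)^[k] (eros n X)`
    exact (ih hμ hμν' : ν' ∈ eros n X) ν hν'ν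

theorem stmt_19 (n : ℕ) :
    (∀ X : Set (Fin n → Bool), eros n X ⊆ X) ∧
      (∀ X : Set (Fin n → Bool), X ≠ Set.univ → ∃ k : ℕ, (eros n)^[k] X = ∅) := by
  refine ⟨eros_subset n, fun X hX => ⟨n, Set.eq_empty_of_forall_notMem fun μ hμ => hX ?_⟩⟩
  exact Set.eq_univ_of_forall fun ν =>
    mem_of_mem_iterate_eros hμ (hammingDist_le_card_fintype.trans_eq (Fintype.card_fin n))
end
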